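/- arXiv:2104.05092 — 3 statements merged into one kernel-verified Lean document; each statement's English description precedes it below -/
import Mathlib

section
/- Let ρ ∈ (1, 2) and let F : ℂ → ℂ be C¹ (as a function of ℝ² → ℝ²) with F(0) = 0, F'(0) = 0, satisfying |F'(u) − F'(v)| ≤ C |u − v|^{ρ−1} for all u, v ∈ ℂ. Then for all a, b, c ∈ ℂ: |F(a) − 2F(b) + F(c)| ≲ |b|^{ρ−1} |a − 2b + c| + |a − b|^ρ + |c − b|^ρ, with implicit constant depending only on C and ρ. -/
lemma seg_norm_le {b a x : ℂ} (hx : x ∈ segment ℝ b a) : ‖x - b‖ ≤ ‖a - b‖ := by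
  rw [segment_eq_image'] at hx
  obtain ⟨t, ⟨ht0, ht1⟩, rfl⟩ := hx
  rw [add_sub_cancel_left, norm_smul, Real.norm_eq_abs, abs_of_nonneg ht0]
  nlinarith [norm_nonneg (a - b)]

theorem stmt4 (ρ C : ℝ) (hρ1 : 1 < ρ) (hρ2 : ρ < 2) (hC : 0 ≤ C) :
    ∃ K : ℝ, 0 ≤ K ∧ ∀ F : ℂ → ℂ, ContDiff ℝ 1 F → F 0 = 0 → fderiv ℝ F 0 = 0 →
      (∀ u v : ℂ, ‖fderiv ℝ F u - fderiv ℝ F v‖ ≤ C * ‖u - v‖ ^ (ρ - 1)) →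
      ∀ a b c : ℂ, ‖F a - 2 * F b + F c‖ ≤
        K * (‖b‖ ^ (ρ - 1) * ‖a - 2 * b + c‖ + ‖a - b‖ ^ ρ + ‖c - b‖ ^ ρ) := by
  refine ⟨C, hC, ?_⟩
  intro F hF h0 hd0 hLip a b c
  set L := fderiv ℝ F b with hLdef
  have hFd : Differentiable ℝ F := hF.differentiable one_ne_zero
  set G : ℂ → ℂ := fun u => F u - L u with hGdef
  have hGd : Differentiable ℝ G := hFd.sub L.differentiable
  have hGf : ∀ x, fderiv ℝ G x = fderiv ℝ F x - L := by
    intro x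
    rw [hGdef]
    rw [fderiv_fun_sub (hFd x) L.differentiableAt, L.fderiv]
  have rpow_comb : ∀ r : ℝ, 0 ≤ r → r ^ (ρ - 1) * r = r ^ ρ := by
    intro r hr
    rcases eq_or_lt_of_le hr with h | h
    · rw [← h, Real.zero_rpow (by linarith), Real.zero_rpow (by linarith), mul_zero]
    · have he : ρ - 1 + 1 = ρ := by ring
      conv_rhs => rw [← he]
      rw [Real.rpow_add_one h.ne']
  have key : ∀ d : ℂ, ‖G d - G b‖ ≤ C * ‖d - b‖ ^ ρ := by
    intro d
    have h1 : ∀ x ∈ segment ℝ b d, DifferentiableAt ℝ G x := fun x _ => hGd x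
    have h2 : ∀ x ∈ segment ℝ b d, ‖fderiv ℝ G x‖ ≤ C * ‖d - b‖ ^ (ρ - 1) := by
      intro x hx
      rw [hGf]
      calc ‖fderiv ℝ F x - L‖ ≤ C * ‖x - b‖ ^ (ρ - 1) := hLip x b
        _ ≤ C * ‖d - b‖ ^ (ρ - 1) :=
          mul_le_mul_of_nonneg_left
            (Real.rpow_le_rpow (norm_nonneg _) (seg_norm_le hx) (by linarith)) hC
    have hmvt := (convex_segment b d).norm_image_sub_le_of_norm_fderiv_le h1 h2
      (left_mem_segment ℝ b d) (right_mem_segment ℝ b d)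
    calc ‖G d - G b‖ ≤ C * ‖d - b‖ ^ (ρ - 1) * ‖d - b‖ := hmvt
      _ = C * ‖d - b‖ ^ ρ := by rw [mul_assoc, rpow_comb _ (norm_nonneg _)]
  have hL2 : L (a - 2 * b + c) = L a - 2 * L b + L c := by
    have h2b : (2 : ℂ) * b = (2 : ℝ) • b := by
      rw [Complex.real_smul]; norm_num
    have h2Lb : (2 : ℂ) * L b = (2 : ℝ) • L b := by
      rw [Complex.real_smul]; norm_num
    rw [h2b, h2Lb, map_add, map_sub, map_smul]
  have hdec : F a - 2 * F b + F c = (G a - G b) + (G c - G b) + L (a - 2 * b + c) := by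
    rw [hL2]
    simp only [hGdef]
    ring
  have hLn : ‖L‖ ≤ C * ‖b‖ ^ (ρ - 1) := by
    have := hLip b 0
    rwa [hd0, sub_zero, sub_zero] at this
  have hLz : ‖L (a - 2 * b + c)‖ ≤ C * ‖b‖ ^ (ρ - 1) * ‖a - 2 * b + c‖ :=
    le_trans (L.le_opNorm _) (mul_le_mul_of_nonneg_right hLn (norm_nonneg _))
  calc ‖F a - 2 * F b + F c‖
      ≤ ‖G a - G b‖ + ‖G c - G b‖ + ‖L (a - 2 * b + c)‖ := by
        rw [hdec]; exact norm_add₃_le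
    _ ≤ C * ‖a - b‖ ^ ρ + C * ‖c - b‖ ^ ρ + C * ‖b‖ ^ (ρ - 1) * ‖a - 2 * b + c‖ := by
        exact add_le_add (add_le_add (key a) (key c)) hLz
    _ = C * (‖b‖ ^ (ρ - 1) * ‖a - 2 * b + c‖ + ‖a - b‖ ^ ρ + ‖c - b‖ ^ ρ) := by ring
end

section
/- Let ρ ∈ (1, 2) and F : ℂ → ℂ be C¹ with F(0) = F'(0) = 0 and |F'(u) − F'(v)| ≤ C|u−v|^{ρ−1}. Then for all a₁, a₂, b₁, b₂ ∈ ℂ: |F(a₁) − F(a₂) − F(b₁) + F(b₂)| ≲ max(|a₁|, |a₂|)^{ρ−1} |(a₁ − b₁) − (a₂ − b₂)| + |b₁ − b₂| · ( |a₁ − b₁|^{ρ−1} + |a₂ − b₂|^{ρ−1} ), with implicit constant depending only on C and ρ. -/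
open Set

lemma rpow_add_le_add_rpow_real {s t r : ℝ} (hs : 0 ≤ s) (ht : 0 ≤ t) (h0 : 0 ≤ r)
    (h1 : r ≤ 1) : (s + t) ^ r ≤ s ^ r + t ^ r := by
  have := NNReal.coe_le_coe.2 (NNReal.rpow_add_le_add_rpow ⟨s, hs⟩ ⟨t, ht⟩ h0 h1)
  exact this

theorem stmt6 (ρ C : ℝ) (hρ1 : 1 < ρ) (hρ2 : ρ < 2) (hC : 0 ≤ C) :
    ∃ K : ℝ, 0 ≤ K ∧ ∀ F : ℂ → ℂ, ContDiff ℝ 1 F → F 0 = 0 → fderiv ℝ F 0 = 0 →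
      (∀ u v : ℂ, ‖fderiv ℝ F u - fderiv ℝ F v‖ ≤ C * ‖u - v‖ ^ (ρ - 1)) →
      ∀ a₁ a₂ b₁ b₂ : ℂ, ‖F a₁ - F a₂ - F b₁ + F b₂‖ ≤
        K * (max ‖a₁‖ ‖a₂‖ ^ (ρ - 1) * ‖(a₁ - b₁) - (a₂ - b₂)‖ +
          ‖b₁ - b₂‖ * (‖a₁ - b₁‖ ^ (ρ - 1) + ‖a₂ - b₂‖ ^ (ρ - 1))) := by
  refine ⟨C, hC, ?_⟩
  intro F hF hF0 hF'0 hHol a₁ a₂ b₁ b₂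
  set r := ρ - 1 with hrdef
  have hr0 : 0 ≤ r := by simp [hrdef]; linarith
  have hr1 : r ≤ 1 := by simp [hrdef]; linarith
  have hFd : Differentiable ℝ F := hF.differentiable one_ne_zero
  have hF' : ∀ u : ℂ, ‖fderiv ℝ F u‖ ≤ C * ‖u‖ ^ r := by
    intro u
    have := hHol u 0
    simpa [hF'0] using this
  set A : ℝ → ℂ := fun θ => a₂ + θ • (a₁ - a₂) with hA
  set B : ℝ → ℂ := fun θ => b₂ + θ • (b₁ - b₂) with hB
  set g : ℝ → ℂ := fun θ => F (A θ) - F (B θ) with hg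
  set g' : ℝ → ℂ := fun θ =>
    fderiv ℝ F (A θ) (a₁ - a₂) - fderiv ℝ F (B θ) (b₁ - b₂) with hg'
  have hderiv : ∀ θ : ℝ, HasDerivAt g (g' θ) θ := by
    intro θ
    have hAθ : HasDerivAt A (a₁ - a₂) θ := by
      simpa [hA] using ((hasDerivAt_id θ).smul_const (a₁ - a₂)).const_add a₂
    have hBθ : HasDerivAt B (b₁ - b₂) θ := by
      simpa [hB] using ((hasDerivAt_id θ).smul_const (b₁ - b₂)).const_add b₂
    exact ((hFd (A θ)).hasFDerivAt.comp_hasDerivAt θ hAθ).sub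
      ((hFd (B θ)).hasFDerivAt.comp_hasDerivAt θ hBθ)
  set M := C * (max ‖a₁‖ ‖a₂‖ ^ r * ‖(a₁ - b₁) - (a₂ - b₂)‖ +
    ‖b₁ - b₂‖ * (‖a₁ - b₁‖ ^ r + ‖a₂ - b₂‖ ^ r)) with hM
  have bound : ∀ θ ∈ Ico (0:ℝ) 1, ‖g' θ‖ ≤ M := by
    intro θ hθ
    obtain ⟨hθ0, hθ1⟩ := hθ
    have hθ1' : θ ≤ 1 := le_of_lt hθ1
    -- rewrite g' θ
    have hsplit : g' θ = fderiv ℝ F (A θ) ((a₁ - b₁) - (a₂ - b₂)) +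
        (fderiv ℝ F (A θ) - fderiv ℝ F (B θ)) (b₁ - b₂) := by
      have : a₁ - a₂ = ((a₁ - b₁) - (a₂ - b₂)) + (b₁ - b₂) := by ring
      simp only [hg', this, map_add, ContinuousLinearMap.sub_apply]
      ring
    rw [hsplit]
    have h1 : ‖fderiv ℝ F (A θ) ((a₁ - b₁) - (a₂ - b₂))‖ ≤
        (C * max ‖a₁‖ ‖a₂‖ ^ r) * ‖(a₁ - b₁) - (a₂ - b₂)‖ := by
      refine le_trans ((fderiv ℝ F (A θ)).le_opNorm _) ?_
      gcongr
      refine le_trans (hF' (A θ)) ?_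
      have hAle : ‖A θ‖ ≤ max ‖a₁‖ ‖a₂‖ := by
        have : A θ = (1 - θ) • a₂ + θ • a₁ := by
          simp only [hA]; module
        rw [this]
        calc ‖(1 - θ) • a₂ + θ • a₁‖ ≤ ‖(1 - θ) • a₂‖ + ‖θ • a₁‖ := norm_add_le _ _
          _ = (1 - θ) * ‖a₂‖ + θ * ‖a₁‖ := by
              rw [norm_smul, norm_smul, Real.norm_eq_abs, Real.norm_eq_abs,
                abs_of_nonneg (by linarith), abs_of_nonneg hθ0]
          _ ≤ (1 - θ) * max ‖a₁‖ ‖a₂‖ + θ * max ‖a₁‖ ‖a₂‖ :=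
              add_le_add (mul_le_mul_of_nonneg_left (le_max_right _ _) (by linarith))
                (mul_le_mul_of_nonneg_left (le_max_left _ _) hθ0)
          _ = max ‖a₁‖ ‖a₂‖ := by ring
      exact mul_le_mul_of_nonneg_left (Real.rpow_le_rpow (norm_nonneg _) hAle hr0) hC
    have h2 : ‖(fderiv ℝ F (A θ) - fderiv ℝ F (B θ)) (b₁ - b₂)‖ ≤
        (C * (‖a₁ - b₁‖ ^ r + ‖a₂ - b₂‖ ^ r)) * ‖b₁ - b₂‖ := by
      refine le_trans ((fderiv ℝ F (A θ) - fderiv ℝ F (B θ)).le_opNorm _) ?_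
      gcongr
      refine le_trans (hHol (A θ) (B θ)) ?_
      gcongr
      have hAB : A θ - B θ = (1 - θ) • (a₂ - b₂) + θ • (a₁ - b₁) := by
        simp only [hA, hB]; module
      have hnorm : ‖A θ - B θ‖ ≤ ‖a₁ - b₁‖ + ‖a₂ - b₂‖ := by
        rw [hAB]
        calc ‖(1 - θ) • (a₂ - b₂) + θ • (a₁ - b₁)‖
            ≤ ‖(1 - θ) • (a₂ - b₂)‖ + ‖θ • (a₁ - b₁)‖ := norm_add_le _ _
          _ = (1 - θ) * ‖a₂ - b₂‖ + θ * ‖a₁ - b₁‖ := by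
              rw [norm_smul, norm_smul, Real.norm_eq_abs, Real.norm_eq_abs,
                abs_of_nonneg (by linarith), abs_of_nonneg hθ0]
          _ ≤ 1 * ‖a₂ - b₂‖ + 1 * ‖a₁ - b₁‖ := by
              gcongr <;> linarith
          _ = ‖a₁ - b₁‖ + ‖a₂ - b₂‖ := by ring
      calc ‖A θ - B θ‖ ^ r ≤ (‖a₁ - b₁‖ + ‖a₂ - b₂‖) ^ r :=
            Real.rpow_le_rpow (norm_nonneg _) hnorm hr0
        _ ≤ ‖a₁ - b₁‖ ^ r + ‖a₂ - b₂‖ ^ r :=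
            rpow_add_le_add_rpow_real (norm_nonneg _) (norm_nonneg _) hr0 hr1
    calc ‖fderiv ℝ F (A θ) ((a₁ - b₁) - (a₂ - b₂)) +
          (fderiv ℝ F (A θ) - fderiv ℝ F (B θ)) (b₁ - b₂)‖
        ≤ ‖fderiv ℝ F (A θ) ((a₁ - b₁) - (a₂ - b₂))‖ +
          ‖(fderiv ℝ F (A θ) - fderiv ℝ F (B θ)) (b₁ - b₂)‖ := norm_add_le _ _
      _ ≤ (C * max ‖a₁‖ ‖a₂‖ ^ r) * ‖(a₁ - b₁) - (a₂ - b₂)‖ +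
          (C * (‖a₁ - b₁‖ ^ r + ‖a₂ - b₂‖ ^ r)) * ‖b₁ - b₂‖ := add_le_add h1 h2
      _ = M := by rw [hM]; ring
  have key : ‖g 1 - g 0‖ ≤ M := by
    refine norm_image_sub_le_of_norm_deriv_le_segment_01' (f' := g') ?_ bound
    intro θ _
    exact (hderiv θ).hasDerivWithinAt
  have hval : g 1 - g 0 = F a₁ - F a₂ - F b₁ + F b₂ := by
    simp only [hg, hA, hB]
    norm_num
    ring
  rw [hval] at key
  simpa [hM, hrdef] using key
end

section
/- Let ρ ≥ 2 and F : ℂ → ℂ be C¹ with F(0) = F'(0) = 0 and |F'(u) − F'(v)| ≤ C max(|u|,|v|)^{ρ−2} |u−v| for all u, v. Then for all a₁, a₂, b₁, b₂ ∈ ℂ: |F(a₁) − F(a₂) − F(b₁) + F(b₂)| ≲ max(|a₁|,|a₂|)^{ρ−1} |(a₁ − a₂) − (b₁ − b₂)| + |b₁ − b₂| · (|a₁| + |a₂| + |b₁| + |b₂|)^{ρ−2} · max(|a₁ − b₁|, |a₂ − b₂|), with implicit constant depending only on C and ρ. -/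
theorem stmt7 (ρ C : ℝ) (hρ : 2 ≤ ρ) (hC : 0 ≤ C) :
    ∃ K : ℝ, 0 ≤ K ∧ ∀ F : ℂ → ℂ, ContDiff ℝ 1 F → F 0 = 0 → fderiv ℝ F 0 = 0 →
      (∀ u v : ℂ, ‖fderiv ℝ F u - fderiv ℝ F v‖ ≤ C * max ‖u‖ ‖v‖ ^ (ρ - 2) * ‖u - v‖) →
      ∀ a₁ a₂ b₁ b₂ : ℂ, ‖F a₁ - F a₂ - F b₁ + F b₂‖ ≤
        K * (max ‖a₁‖ ‖a₂‖ ^ (ρ - 1) * ‖(a₁ - a₂) - (b₁ - b₂)‖ +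
          ‖b₁ - b₂‖ * (‖a₁‖ + ‖a₂‖ + ‖b₁‖ + ‖b₂‖) ^ (ρ - 2) *
            max ‖a₁ - b₁‖ ‖a₂ - b₂‖) := by
  refine ⟨C, hC, ?_⟩
  intro F hF hF0 hF'0 hlip a₁ a₂ b₁ b₂
  have h2 : (0:ℝ) ≤ ρ - 2 := by linarith
  have h1 : (0:ℝ) ≤ ρ - 1 := by linarith
  have hFd : Differentiable ℝ F := hF.differentiable one_ne_zero
  set D : ℂ := (a₁ - a₂) - (b₁ - b₂) with hD
  set S : ℝ := ‖a₁‖ + ‖a₂‖ + ‖b₁‖ + ‖b₂‖ with hS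
  set Ma : ℝ := max ‖a₁‖ ‖a₂‖ with hMa
  set Mab : ℝ := max ‖a₁ - b₁‖ ‖a₂ - b₂‖ with hMab
  set M : ℝ := C * (Ma ^ (ρ - 1) * ‖D‖ + ‖b₁ - b₂‖ * S ^ (ρ - 2) * Mab) with hM
  -- pointwise bound on fderiv
  have hfd : ∀ u : ℂ, ‖fderiv ℝ F u‖ ≤ C * ‖u‖ ^ (ρ - 1) := by
    intro u
    have := hlip u 0
    simp only [hF'0, sub_zero, norm_zero, max_eq_left (norm_nonneg u)] at this
    calc ‖fderiv ℝ F u‖ ≤ C * ‖u‖ ^ (ρ - 2) * ‖u‖ := this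
      _ = C * ‖u‖ ^ (ρ - 1) := by
          rw [mul_assoc]
          congr 1
          rw [show ρ - 1 = (ρ - 2) + 1 by ring,
            Real.rpow_add' (norm_nonneg u) (show ρ - 2 + 1 ≠ 0 by intro h; linarith),
            Real.rpow_one]
  set γa : ℝ → ℂ := fun t => a₂ + t • (a₁ - a₂) with hγa
  set γb : ℝ → ℂ := fun t => b₂ + t • (b₁ - b₂) with hγb
  set G : ℝ → ℂ := fun t => F (γa t) - F (γb t) with hG
  set G' : ℝ → ℂ := fun t => fderiv ℝ F (γa t) (a₁ - a₂) - fderiv ℝ F (γb t) (b₁ - b₂)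
    with hG'
  have hderiv : ∀ t ∈ Set.Icc (0:ℝ) 1, HasDerivWithinAt G (G' t) (Set.Icc 0 1) t := by
    intro t _
    have ha : HasDerivAt γa (a₁ - a₂) t := by
      have := ((hasDerivAt_id t).smul_const (a₁ - a₂)).const_add a₂
      simpa [hγa] using this
    have hb : HasDerivAt γb (b₁ - b₂) t := by
      have := ((hasDerivAt_id t).smul_const (b₁ - b₂)).const_add b₂
      simpa [hγb] using this
    have haa : HasDerivAt (fun t => F (γa t)) (fderiv ℝ F (γa t) (a₁ - a₂)) t :=
      (hFd (γa t)).hasFDerivAt.comp_hasDerivAt t ha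
    have hbb : HasDerivAt (fun t => F (γb t)) (fderiv ℝ F (γb t) (b₁ - b₂)) t :=
      (hFd (γb t)).hasFDerivAt.comp_hasDerivAt t hb
    exact (haa.sub hbb).hasDerivWithinAt
  have hbound : ∀ t ∈ Set.Icc (0:ℝ) 1, ‖G' t‖ ≤ M := by
    intro t ht
    obtain ⟨ht0, ht1⟩ := ht
    -- norms of the paths
    have hna : ‖γa t‖ ≤ Ma := by
      have e : γa t = (1 - t) • a₂ + t • a₁ := by
        simp only [hγa]
        module
      rw [e]
      calc ‖(1 - t) • a₂ + t • a₁‖ ≤ ‖(1 - t) • a₂‖ + ‖t • a₁‖ := norm_add_le _ _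
        _ = (1 - t) * ‖a₂‖ + t * ‖a₁‖ := by
            rw [norm_smul, norm_smul, Real.norm_eq_abs, Real.norm_eq_abs,
              abs_of_nonneg (by linarith), abs_of_nonneg ht0]
        _ ≤ (1 - t) * Ma + t * Ma := by
            have h1' := mul_le_mul_of_nonneg_left (le_max_right ‖a₁‖ ‖a₂‖)
              (by linarith : (0:ℝ) ≤ 1 - t)
            have h2' := mul_le_mul_of_nonneg_left (le_max_left ‖a₁‖ ‖a₂‖) ht0
            simp only [← hMa] at h1' h2'
            linarith
        _ = Ma := by ring
    have hnb : ‖γb t‖ ≤ ‖b₁‖ + ‖b₂‖ := by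
      have e : γb t = (1 - t) • b₂ + t • b₁ := by
        simp only [hγb]
        module
      rw [e]
      calc ‖(1 - t) • b₂ + t • b₁‖ ≤ ‖(1 - t) • b₂‖ + ‖t • b₁‖ := norm_add_le _ _
        _ = (1 - t) * ‖b₂‖ + t * ‖b₁‖ := by
            rw [norm_smul, norm_smul, Real.norm_eq_abs, Real.norm_eq_abs,
              abs_of_nonneg (by linarith), abs_of_nonneg ht0]
        _ ≤ (1 - t) * (‖b₁‖ + ‖b₂‖) + t * (‖b₁‖ + ‖b₂‖) := by
            have h1' := mul_le_mul_of_nonneg_left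
              (by linarith [norm_nonneg b₁] : ‖b₂‖ ≤ ‖b₁‖ + ‖b₂‖)
              (by linarith : (0:ℝ) ≤ 1 - t)
            have h2' := mul_le_mul_of_nonneg_left
              (by linarith [norm_nonneg b₂] : ‖b₁‖ ≤ ‖b₁‖ + ‖b₂‖) ht0
            linarith
        _ = ‖b₁‖ + ‖b₂‖ := by ring
    have hdiff : ‖γa t - γb t‖ ≤ Mab := by
      have e : γa t - γb t = (1 - t) • (a₂ - b₂) + t • (a₁ - b₁) := by
        simp only [hγa, hγb]
        module
      rw [e]
      calc ‖(1 - t) • (a₂ - b₂) + t • (a₁ - b₁)‖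
          ≤ ‖(1 - t) • (a₂ - b₂)‖ + ‖t • (a₁ - b₁)‖ := norm_add_le _ _
        _ = (1 - t) * ‖a₂ - b₂‖ + t * ‖a₁ - b₁‖ := by
            rw [norm_smul, norm_smul, Real.norm_eq_abs, Real.norm_eq_abs,
              abs_of_nonneg (by linarith), abs_of_nonneg ht0]
        _ ≤ (1 - t) * Mab + t * Mab := by
            have h1' := mul_le_mul_of_nonneg_left (le_max_right ‖a₁ - b₁‖ ‖a₂ - b₂‖)
              (by linarith : (0:ℝ) ≤ 1 - t)
            have h2' := mul_le_mul_of_nonneg_left (le_max_left ‖a₁ - b₁‖ ‖a₂ - b₂‖) ht0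
            simp only [← hMab] at h1' h2'
            linarith
        _ = Mab := by ring
    -- bound first piece
    have e1 : fderiv ℝ F (γa t) (a₁ - a₂) =
        fderiv ℝ F (γa t) D + fderiv ℝ F (γa t) (b₁ - b₂) := by
      rw [← map_add]
      congr 1
      simp only [hD]; ring
    have eG : G' t = fderiv ℝ F (γa t) D +
        (fderiv ℝ F (γa t) - fderiv ℝ F (γb t)) (b₁ - b₂) := by
      simp only [hG', e1, ContinuousLinearMap.sub_apply]
      abel
    have b1 : ‖fderiv ℝ F (γa t) D‖ ≤ C * Ma ^ (ρ - 1) * ‖D‖ := by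
      calc ‖fderiv ℝ F (γa t) D‖ ≤ ‖fderiv ℝ F (γa t)‖ * ‖D‖ :=
            (fderiv ℝ F (γa t)).le_opNorm D
        _ ≤ C * Ma ^ (ρ - 1) * ‖D‖ := by
            refine mul_le_mul_of_nonneg_right ?_ (norm_nonneg _)
            calc ‖fderiv ℝ F (γa t)‖ ≤ C * ‖γa t‖ ^ (ρ - 1) := hfd _
              _ ≤ C * Ma ^ (ρ - 1) :=
                  mul_le_mul_of_nonneg_left
                    (Real.rpow_le_rpow (norm_nonneg _) hna h1) hC
    have b2 : ‖(fderiv ℝ F (γa t) - fderiv ℝ F (γb t)) (b₁ - b₂)‖ ≤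
        C * S ^ (ρ - 2) * Mab * ‖b₁ - b₂‖ := by
      calc ‖(fderiv ℝ F (γa t) - fderiv ℝ F (γb t)) (b₁ - b₂)‖
          ≤ ‖fderiv ℝ F (γa t) - fderiv ℝ F (γb t)‖ * ‖b₁ - b₂‖ :=
            ContinuousLinearMap.le_opNorm _ _
        _ ≤ C * S ^ (ρ - 2) * Mab * ‖b₁ - b₂‖ := by
            have hop : ‖fderiv ℝ F (γa t) - fderiv ℝ F (γb t)‖ ≤ C * S ^ (ρ - 2) * Mab := by
              have hMaS : Ma ≤ S := by
                rw [hMa, hS]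
                exact max_le (by linarith [norm_nonneg a₂, norm_nonneg b₁, norm_nonneg b₂])
                  (by linarith [norm_nonneg a₁, norm_nonneg b₁, norm_nonneg b₂])
              have hmax : max ‖γa t‖ ‖γb t‖ ≤ S :=
                max_le (hna.trans hMaS)
                  (hnb.trans (by rw [hS]; linarith [norm_nonneg a₁, norm_nonneg a₂]))
              have hr : max ‖γa t‖ ‖γb t‖ ^ (ρ - 2) ≤ S ^ (ρ - 2) :=
                Real.rpow_le_rpow (le_max_of_le_left (norm_nonneg _)) hmax h2
              calc ‖fderiv ℝ F (γa t) - fderiv ℝ F (γb t)‖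
                  ≤ C * max ‖γa t‖ ‖γb t‖ ^ (ρ - 2) * ‖γa t - γb t‖ := hlip _ _
                _ ≤ C * S ^ (ρ - 2) * Mab := by
                    have hnn : (0:ℝ) ≤ C * max ‖γa t‖ ‖γb t‖ ^ (ρ - 2) :=
                      mul_nonneg hC (Real.rpow_nonneg (le_max_of_le_left (norm_nonneg _)) _)
                    exact mul_le_mul (mul_le_mul_of_nonneg_left hr hC) hdiff (norm_nonneg _)
                      (mul_nonneg hC (Real.rpow_nonneg
                        (le_trans (le_max_of_le_left (norm_nonneg (γa t))) hmax) _))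
            exact mul_le_mul_of_nonneg_right hop (norm_nonneg _)
    calc ‖G' t‖ ≤ ‖fderiv ℝ F (γa t) D‖ +
          ‖(fderiv ℝ F (γa t) - fderiv ℝ F (γb t)) (b₁ - b₂)‖ := by
          rw [eG]; exact norm_add_le _ _
      _ ≤ C * Ma ^ (ρ - 1) * ‖D‖ + C * S ^ (ρ - 2) * Mab * ‖b₁ - b₂‖ := add_le_add b1 b2
      _ = M := by rw [hM]; ring
  have key := (convex_Icc (0:ℝ) 1).norm_image_sub_le_of_norm_hasDerivWithin_le
    hderiv hbound (Set.left_mem_Icc.mpr zero_le_one) (Set.right_mem_Icc.mpr zero_le_one)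
  have hG1 : G 1 = F a₁ - F b₁ := by simp [hG, hγa, hγb]
  have hG0 : G 0 = F a₂ - F b₂ := by simp [hG, hγa, hγb]
  have : ‖F a₁ - F a₂ - F b₁ + F b₂‖ ≤ M := by
    have e : F a₁ - F a₂ - F b₁ + F b₂ = G 1 - G 0 := by rw [hG1, hG0]; ring
    rw [e]
    simpa using key
  calc ‖F a₁ - F a₂ - F b₁ + F b₂‖ ≤ M := this
    _ = C * (Ma ^ (ρ - 1) * ‖D‖ + ‖b₁ - b₂‖ * S ^ (ρ - 2) * Mab) := hM
end
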